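/- Let F1 and F2 be finite subsets of ℤ² with |F1| < |F2|. Then there exists a finite set F3 ⊆ F2 with |F3| = |F1|, F1 ∩ F3 = F1 ∩ F2, and such that the error in the line sums of F1 and F3 is at most the error in the line sums of F1 and F2. -/
import Mathlib


/-- Number of elements of `F` in row `i` (points with first coordinate `i`). -/
def rowSum (F : Finset (ℤ × ℤ)) (i : ℤ) : ℕ := (F.filter (fun p => p.1 = i)).card

/-- Number of elements of `F` in column `j` (points with second coordinate `j`). -/
def colSum (F : Finset (ℤ × ℤ)) (j : ℤ) : ℕ := (F.filter (fun p => p.2 = j)).card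

/-- The total error in the line sums of `F` and `G`:
`∑ i |r_i(F) − r_i(G)| + ∑ j |c_j(F) − c_j(G)|`. -/
noncomputable def lineError (F G : Finset (ℤ × ℤ)) : ℤ :=
  (∑ᶠ i : ℤ, |(rowSum F i : ℤ) - (rowSum G i : ℤ)|) +
  (∑ᶠ j : ℤ, |(colSum F j : ℤ) - (colSum G j : ℤ)|)

/-- `F` is uniquely determined by its row and column sums. -/
def UniquelyDetermined (F : Finset (ℤ × ℤ)) : Prop :=
  ∀ G : Finset (ℤ × ℤ),
    (∀ i, rowSum G i = rowSum F i) → (∀ j, colSum G j = colSum F j) → G = F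

lemma rowSum_support (F : Finset (ℤ × ℤ)) (i : ℤ) (h : rowSum F i ≠ 0) :
    i ∈ F.image Prod.fst := by
  obtain ⟨p, hp⟩ := Finset.card_pos.mp (Nat.pos_of_ne_zero h)
  simp only [Finset.mem_filter] at hp
  exact Finset.mem_image.mpr ⟨p, hp.1, hp.2⟩

lemma colSum_support (F : Finset (ℤ × ℤ)) (j : ℤ) (h : colSum F j ≠ 0) :
    j ∈ F.image Prod.snd := by
  obtain ⟨p, hp⟩ := Finset.card_pos.mp (Nat.pos_of_ne_zero h)
  simp only [Finset.mem_filter] at hp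
  exact Finset.mem_image.mpr ⟨p, hp.1, hp.2⟩

lemma finsum_row_eq (F G : Finset (ℤ × ℤ)) (s : Finset ℤ)
    (hF : F.image Prod.fst ⊆ s) (hG : G.image Prod.fst ⊆ s) :
    (∑ᶠ i : ℤ, |(rowSum F i : ℤ) - (rowSum G i : ℤ)|)
      = ∑ i ∈ s, |(rowSum F i : ℤ) - (rowSum G i : ℤ)| := by
  apply finsum_eq_sum_of_support_subset
  intro i hi
  simp only [Function.mem_support] at hi
  by_cases h : rowSum F i = 0
  · have : rowSum G i ≠ 0 := by
      intro h'; apply hi; rw [h, h']; simp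
    exact hG (rowSum_support G i this)
  · exact hF (rowSum_support F i h)

lemma finsum_col_eq (F G : Finset (ℤ × ℤ)) (t : Finset ℤ)
    (hF : F.image Prod.snd ⊆ t) (hG : G.image Prod.snd ⊆ t) :
    (∑ᶠ j : ℤ, |(colSum F j : ℤ) - (colSum G j : ℤ)|)
      = ∑ j ∈ t, |(colSum F j : ℤ) - (colSum G j : ℤ)| := by
  apply finsum_eq_sum_of_support_subset
  intro j hj
  simp only [Function.mem_support] at hj
  by_cases h : colSum F j = 0
  · have : colSum G j ≠ 0 := by
      intro h'; apply hj; rw [h, h']; simp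
    exact hG (colSum_support G j this)
  · exact hF (colSum_support F j h)

lemma rowSum_erase (G : Finset (ℤ × ℤ)) (p : ℤ × ℤ) (hp : p ∈ G) (i : ℤ) :
    rowSum (G.erase p) i = if p.1 = i then rowSum G i - 1 else rowSum G i := by
  unfold rowSum
  rw [Finset.filter_erase]
  split_ifs with h
  · rw [Finset.card_erase_of_mem (Finset.mem_filter.mpr ⟨hp, h⟩)]
  · rw [Finset.erase_eq_of_notMem]
    intro hmem
    exact h (Finset.mem_filter.mp hmem).2

lemma colSum_erase (G : Finset (ℤ × ℤ)) (p : ℤ × ℤ) (hp : p ∈ G) (j : ℤ) :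
    colSum (G.erase p) j = if p.2 = j then colSum G j - 1 else colSum G j := by
  unfold colSum
  rw [Finset.filter_erase]
  split_ifs with h
  · rw [Finset.card_erase_of_mem (Finset.mem_filter.mpr ⟨hp, h⟩)]
  · rw [Finset.erase_eq_of_notMem]
    intro hmem
    exact h (Finset.mem_filter.mp hmem).2

lemma card_eq_sum_rowSum (F : Finset (ℤ × ℤ)) (s : Finset ℤ)
    (hF : F.image Prod.fst ⊆ s) : F.card = ∑ i ∈ s, rowSum F i := by
  exact Finset.card_eq_sum_card_fiberwise
    (fun p hp => hF (Finset.mem_image.mpr ⟨p, hp, rfl⟩))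

lemma lineError_erase_le (F1 G : Finset (ℤ × ℤ)) (p : ℤ × ℤ) (hpG : p ∈ G)
    (hrow : rowSum F1 p.1 < rowSum G p.1) :
    lineError F1 (G.erase p) ≤ lineError F1 G := by
  classical
  set s : Finset ℤ := (F1 ∪ G).image Prod.fst with hs
  set t : Finset ℤ := (F1 ∪ G).image Prod.snd with ht
  have hF1s : F1.image Prod.fst ⊆ s := Finset.image_subset_image Finset.subset_union_left
  have hGs : G.image Prod.fst ⊆ s := Finset.image_subset_image Finset.subset_union_right
  have hEs : (G.erase p).image Prod.fst ⊆ s :=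
    subset_trans (Finset.image_subset_image (Finset.erase_subset _ _)) hGs
  have hF1t : F1.image Prod.snd ⊆ t := Finset.image_subset_image Finset.subset_union_left
  have hGt : G.image Prod.snd ⊆ t := Finset.image_subset_image Finset.subset_union_right
  have hEt : (G.erase p).image Prod.snd ⊆ t :=
    subset_trans (Finset.image_subset_image (Finset.erase_subset _ _)) hGt
  have hp1s : p.1 ∈ s := hGs (Finset.mem_image.mpr ⟨p, hpG, rfl⟩)
  have hp2t : p.2 ∈ t := hGt (Finset.mem_image.mpr ⟨p, hpG, rfl⟩)
  rw [lineError, lineError, finsum_row_eq F1 (G.erase p) s hF1s hEs,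
    finsum_row_eq F1 G s hF1s hGs, finsum_col_eq F1 (G.erase p) t hF1t hEt,
    finsum_col_eq F1 G t hF1t hGt]
  have hGpos : 1 ≤ rowSum G p.1 := lt_of_le_of_lt (Nat.zero_le _) hrow
  -- row part
  have hrowpart : (∑ i ∈ s, |(rowSum F1 i : ℤ) - (rowSum (G.erase p) i : ℤ)|)
      = (∑ i ∈ s, |(rowSum F1 i : ℤ) - (rowSum G i : ℤ)|) - 1 := by
    rw [← Finset.add_sum_erase _ _ hp1s, ← Finset.add_sum_erase _ _ hp1s]
    have h1 : ∀ i ∈ s.erase p.1,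
        |(rowSum F1 i : ℤ) - (rowSum (G.erase p) i : ℤ)|
          = |(rowSum F1 i : ℤ) - (rowSum G i : ℤ)| := by
      intro i hi
      rw [rowSum_erase G p hpG i, if_neg (Finset.ne_of_mem_erase hi ∘ Eq.symm ∘ id)]
    rw [Finset.sum_congr rfl h1]
    have h2 : |(rowSum F1 p.1 : ℤ) - (rowSum (G.erase p) p.1 : ℤ)|
        = |(rowSum F1 p.1 : ℤ) - (rowSum G p.1 : ℤ)| - 1 := by
      rw [rowSum_erase G p hpG p.1, if_pos rfl]
      have h3 : ((rowSum G p.1 - 1 : ℕ) : ℤ) = (rowSum G p.1 : ℤ) - 1 := by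
        omega
      rw [h3]
      have : (rowSum F1 p.1 : ℤ) < (rowSum G p.1 : ℤ) := by exact_mod_cast hrow
      rw [abs_of_nonpos (by omega), abs_of_nonpos (by omega)]
      ring
    rw [h2]; ring
  -- col part
  have hcolpart : (∑ j ∈ t, |(colSum F1 j : ℤ) - (colSum (G.erase p) j : ℤ)|)
      ≤ (∑ j ∈ t, |(colSum F1 j : ℤ) - (colSum G j : ℤ)|) + 1 := by
    rw [← Finset.add_sum_erase _ _ hp2t, ← Finset.add_sum_erase _ _ hp2t]
    have h1 : ∀ j ∈ t.erase p.2,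
        |(colSum F1 j : ℤ) - (colSum (G.erase p) j : ℤ)|
          = |(colSum F1 j : ℤ) - (colSum G j : ℤ)| := by
      intro j hj
      rw [colSum_erase G p hpG j, if_neg (Finset.ne_of_mem_erase hj ∘ Eq.symm ∘ id)]
    rw [Finset.sum_congr rfl h1]
    have h2 : |(colSum F1 p.2 : ℤ) - (colSum (G.erase p) p.2 : ℤ)|
        ≤ |(colSum F1 p.2 : ℤ) - (colSum G p.2 : ℤ)| + 1 := by
      rw [colSum_erase G p hpG p.2, if_pos rfl]
      have hcpos : 1 ≤ colSum G p.2 :=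
        Finset.card_pos.mpr ⟨p, Finset.mem_filter.mpr ⟨hpG, rfl⟩⟩
      have h3 : ((colSum G p.2 - 1 : ℕ) : ℤ) = (colSum G p.2 : ℤ) - 1 := by omega
      rw [h3]
      have := abs_sub_abs_le_abs_sub ((colSum F1 p.2 : ℤ) - ((colSum G p.2 : ℤ) - 1))
        ((colSum F1 p.2 : ℤ) - (colSum G p.2 : ℤ))
      have h4 : |(colSum F1 p.2 : ℤ) - ((colSum G p.2 : ℤ) - 1)
          - ((colSum F1 p.2 : ℤ) - (colSum G p.2 : ℤ))| = 1 := by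
        norm_num
      omega
    omega
  omega

lemma exists_removable (F1 G : Finset (ℤ × ℤ)) (h : F1.card < G.card) :
    ∃ p ∈ G, p ∉ F1 ∧ rowSum F1 p.1 < rowSum G p.1 := by
  classical
  set s : Finset ℤ := (F1 ∪ G).image Prod.fst with hs
  have hF1s : F1.image Prod.fst ⊆ s := Finset.image_subset_image Finset.subset_union_left
  have hGs : G.image Prod.fst ⊆ s := Finset.image_subset_image Finset.subset_union_right
  have hsum : ∑ i ∈ s, rowSum F1 i < ∑ i ∈ s, rowSum G i := by
    rw [← card_eq_sum_rowSum F1 s hF1s, ← card_eq_sum_rowSum G s hGs]; exact h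
  obtain ⟨i, _, hi⟩ : ∃ i ∈ s, rowSum F1 i < rowSum G i := by
    by_contra hcon
    push_neg at hcon
    exact absurd (Finset.sum_le_sum hcon) (not_le.mpr hsum)
  -- in row i, G has more points than F1, hence a point of G in row i outside F1
  have hsub : (F1 ∩ G).filter (fun p => p.1 = i) ⊆ G.filter (fun p => p.1 = i) :=
    Finset.filter_subset_filter _ (Finset.inter_subset_right)
  have hlt : ((F1 ∩ G).filter (fun p => p.1 = i)).card < (G.filter (fun p => p.1 = i)).card := by
    calc ((F1 ∩ G).filter (fun p => p.1 = i)).card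
        ≤ (F1.filter (fun p => p.1 = i)).card :=
          Finset.card_le_card (Finset.filter_subset_filter _ Finset.inter_subset_left)
      _ < (G.filter (fun p => p.1 = i)).card := hi
  have hnot : ¬ (G.filter (fun p => p.1 = i) ⊆ (F1 ∩ G).filter (fun p => p.1 = i)) :=
    fun hsub' => absurd (Finset.card_le_card hsub') (not_le.mpr hlt)
  rw [Finset.not_subset] at hnot
  obtain ⟨p, hpG, hpn⟩ := hnot
  rw [Finset.mem_filter] at hpG
  refine ⟨p, hpG.1, ?_, hpG.2 ▸ hi⟩
  intro hpF1
  exact hpn (Finset.mem_filter.mpr ⟨Finset.mem_inter.mpr ⟨hpF1, hpG.1⟩, hpG.2⟩)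

lemma shrink_aux (F1 : Finset (ℤ × ℤ)) :
    ∀ n (G : Finset (ℤ × ℤ)), G.card = F1.card + n →
    ∃ F3, F3 ⊆ G ∧ F3.card = F1.card ∧ F1 ∩ F3 = F1 ∩ G ∧
      lineError F1 F3 ≤ lineError F1 G := by
  intro n
  induction n with
  | zero => exact fun G hG => ⟨G, subset_rfl, by omega, rfl, le_rfl⟩
  | succ n ih =>
    intro G hG
    have hlt : F1.card < G.card := by omega
    obtain ⟨p, hpG, hpF1, hrow⟩ := exists_removable F1 G hlt
    have hcard' : (G.erase p).card = F1.card + n := by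
      rw [Finset.card_erase_of_mem hpG]; omega
    obtain ⟨F3, h1, h2, h3, h4⟩ := ih (G.erase p) hcard'
    refine ⟨F3, h1.trans (Finset.erase_subset _ _), h2, ?_,
      h4.trans (lineError_erase_le F1 G p hpG hrow)⟩
    rw [h3, Finset.inter_erase, Finset.erase_eq_of_notMem]
    intro hmem
    exact hpF1 (Finset.mem_inter.mp hmem).1

theorem shrink_larger_set
    (F1 F2 : Finset (ℤ × ℤ)) (hcard : F1.card < F2.card) :
    ∃ F3 : Finset (ℤ × ℤ), F3 ⊆ F2 ∧ F3.card = F1.card ∧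
      F1 ∩ F3 = F1 ∩ F2 ∧ lineError F1 F3 ≤ lineError F1 F2 :=
  shrink_aux F1 (F2.card - F1.card) F2 (by omega)
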